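/- Suboptimality bound with action-dependent rewards (Theorem 1, finite case): Let S, A, Z be finite sets, R : S × A → ℝ bounded by R_max, γ ∈ [0,1). Suppose P(s|z) is a shared (policy-independent) conditional distribution on S given z, K(z'|z,a) is a shared Markov kernel, and ρ_θ(z,a), ρ_E(z,a) are latent state-action visitation distributions with conditional action posteriors P_θ(a|z,z') and P_E(a|z,z') and latent transition marginals ρ_θ(z,z'), ρ_E(z,z'). Define J_i = (1/(1−γ)) Σ_{z,a} ρ_i(z,a) Σ_s P(s|z) R(s,a). Then |J_E − J_θ| ≤ (2 R_max/(1−γ)) · D_TV(ρ_θ(z,z'), ρ_E(z,z')) + (2 R_max/(1−γ)) · E_{(z,z')∼ρ_θ}[ D_TV(P_θ(·|z,z'), P_E(·|z,z')) ]. -/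

import Mathlib

open Finset

/-!
The return gap is the difference of the expectations of the bounded reward `z, a ↦ E[R(s, a) | z]`
under `ρ_E` and `ρ_θ`, hence at most `2 R_max / (1 - γ)` times their total variation distance.
Because `K` is shared, appending `z' ∼ K(· | z, a)` to both distributions leaves that distance
unchanged, and the resulting joints factor as `ρᵢ(z, z') Pᵢ(a | z, z')`. Splitting
`P_θ ρ_θ - P_E ρ_E = (P_θ - P_E) ρ_θ + P_E (ρ_θ - ρ_E)` gives the two terms of the bound.
-/

noncomputable def tvDist {ι : Type*} [Fintype ι] (p q : ι → ℝ) : ℝ :=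
  1 / 2 * ∑ i, |p i - q i|

section TotalVariation

variable {ι : Type*} [Fintype ι]

theorem tvDist_comp_equiv {κ : Type*} [Fintype κ] (e : κ ≃ ι) (p q : ι → ℝ) :
    tvDist (p ∘ e) (q ∘ e) = tvDist p q := by
  simp only [tvDist, Function.comp_apply, e.sum_comp fun i => |p i - q i|]

theorem abs_sum_mul_le_of_sum_eq_one {w f : ι → ℝ} {M : ℝ} (hw0 : ∀ i, 0 ≤ w i)
    (hw1 : ∑ i, w i = 1) (hf : ∀ i, |f i| ≤ M) : |∑ i, w i * f i| ≤ M :=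
  calc |∑ i, w i * f i| ≤ ∑ i, w i * M :=
        (abs_sum_le_sum_abs _ _).trans <| sum_le_sum fun i _ => by
          rw [abs_mul, abs_of_nonneg (hw0 i)]
          exact mul_le_mul_of_nonneg_left (hf i) (hw0 i)
    _ = M := by rw [← sum_mul, hw1, one_mul]

theorem abs_sum_mul_sub_sum_mul_le (p q f : ι → ℝ) {M : ℝ} (hf : ∀ i, |f i| ≤ M) :
    |∑ i, p i * f i - ∑ i, q i * f i| ≤ 2 * M * tvDist p q :=
  calc |∑ i, p i * f i - ∑ i, q i * f i| ≤ ∑ i, |p i - q i| * M := by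
        rw [← sum_sub_distrib]
        refine (abs_sum_le_sum_abs _ _).trans (sum_le_sum fun i _ => ?_)
        rw [← sub_mul, abs_mul]
        exact mul_le_mul_of_nonneg_left (hf i) (abs_nonneg _)
    _ = 2 * M * tvDist p q := by rw [tvDist, ← sum_mul]; ring

theorem tvDist_mul_kernel {Y : Type*} [Fintype Y] (p q : ι → ℝ) {K : ι → Y → ℝ}
    (hK0 : ∀ i y, 0 ≤ K i y) (hK1 : ∀ i, ∑ y, K i y = 1) :
    tvDist (fun x : ι × Y => p x.1 * K x.1 x.2) (fun x => q x.1 * K x.1 x.2) = tvDist p q := by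
  simp only [tvDist, Fintype.sum_prod_type, ← sub_mul, abs_mul, abs_of_nonneg (hK0 _ _),
    ← mul_sum, hK1, mul_one]

theorem tvDist_mul_le {A : Type*} [Fintype A] {p q : ι → ℝ} {P Q : ι → A → ℝ}
    (hp : ∀ i, 0 ≤ p i) (hQ0 : ∀ i a, 0 ≤ Q i a) (hQ1 : ∀ i, ∑ a, Q i a ≤ 1) :
    tvDist (fun x : ι × A => P x.1 x.2 * p x.1) (fun x => Q x.1 x.2 * q x.1)
      ≤ tvDist p q + ∑ i, p i * tvDist (P i) (Q i) := by
  have hfiber : ∀ i, ∑ a, |P i a * p i - Q i a * q i|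
      ≤ |p i - q i| + p i * ∑ a, |P i a - Q i a| := fun i =>
    calc ∑ a, |P i a * p i - Q i a * q i|
        ≤ ∑ a, (|P i a - Q i a| * p i + Q i a * |p i - q i|) := sum_le_sum fun a _ => by
          rw [show P i a * p i - Q i a * q i = (P i a - Q i a) * p i + Q i a * (p i - q i) by ring]
          refine (abs_add_le _ _).trans_eq ?_
          rw [abs_mul, abs_mul, abs_of_nonneg (hp i), abs_of_nonneg (hQ0 i a)]
      _ = (∑ a, Q i a) * |p i - q i| + p i * ∑ a, |P i a - Q i a| := by
          rw [sum_add_distrib, ← sum_mul, ← sum_mul, mul_comm, add_comm]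
      _ ≤ |p i - q i| + p i * ∑ a, |P i a - Q i a| := by
          gcongr
          exact mul_le_of_le_one_left (abs_nonneg _) (hQ1 i)
  calc tvDist (fun x : ι × A => P x.1 x.2 * p x.1) (fun x => Q x.1 x.2 * q x.1)
      ≤ 1 / 2 * ∑ i, (|p i - q i| + p i * ∑ a, |P i a - Q i a|) := by
        rw [tvDist, Fintype.sum_prod_type]
        gcongr with i
        exact hfiber i
    _ = tvDist p q + ∑ i, p i * tvDist (P i) (Q i) := by
        simp only [tvDist, sum_add_distrib, mul_add, mul_sum]
        congr 1
        exact sum_congr rfl fun i _ => sum_congr rfl fun a _ => by ring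

end TotalVariation

section LatentModel

variable {Z A : Type*} [Fintype A]

def transitionMarginal (ρ : Z × A → ℝ) (K : Z → A → Z → ℝ) (y : Z × Z) : ℝ :=
  ∑ a, ρ (y.1, a) * K y.1 a y.2

noncomputable def actionPosterior (ρ : Z × A → ℝ) (K : Z → A → Z → ℝ) (z z' : Z) (a : A) : ℝ :=
  ρ (z, a) * K z a z' / transitionMarginal ρ K (z, z')

variable {ρ : Z × A → ℝ} {K : Z → A → Z → ℝ}

theorem transitionMarginal_nonneg (hρ0 : ∀ x, 0 ≤ ρ x) (hK0 : ∀ z a z', 0 ≤ K z a z')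
    (y : Z × Z) : 0 ≤ transitionMarginal ρ K y :=
  sum_nonneg fun _ _ => mul_nonneg (hρ0 _) (hK0 _ _ _)

theorem actionPosterior_nonneg (hρ0 : ∀ x, 0 ≤ ρ x) (hK0 : ∀ z a z', 0 ≤ K z a z')
    (z z' : Z) (a : A) : 0 ≤ actionPosterior ρ K z z' a :=
  div_nonneg (mul_nonneg (hρ0 _) (hK0 _ _ _)) (transitionMarginal_nonneg hρ0 hK0 _)

theorem sum_actionPosterior_le_one (z z' : Z) : ∑ a, actionPosterior ρ K z z' a ≤ 1 := by
  simp only [actionPosterior, ← sum_div]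
  exact div_self_le_one _

theorem actionPosterior_mul_transitionMarginal (hρ0 : ∀ x, 0 ≤ ρ x)
    (hK0 : ∀ z a z', 0 ≤ K z a z') (z z' : Z) (a : A) :
    actionPosterior ρ K z z' a * transitionMarginal ρ K (z, z') = ρ (z, a) * K z a z' := by
  by_cases h : transitionMarginal ρ K (z, z') = 0
  · have hterm := (sum_eq_zero_iff_of_nonneg fun b _ => mul_nonneg (hρ0 (z, b)) (hK0 z b z')).1 h
    rw [h, mul_zero, hterm a (mem_univ a)]
  · exact div_mul_cancel₀ _ h

theorem tvDist_le_tvDist_transitionMarginal_add [Fintype Z] {ρ' : Z × A → ℝ}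
    (hρ0 : ∀ x, 0 ≤ ρ x) (hρ'0 : ∀ x, 0 ≤ ρ' x) (hK0 : ∀ z a z', 0 ≤ K z a z')
    (hK1 : ∀ z a, ∑ z', K z a z' = 1) :
    tvDist ρ ρ' ≤ tvDist (transitionMarginal ρ K) (transitionMarginal ρ' K)
      + ∑ y, transitionMarginal ρ K y
          * tvDist (actionPosterior ρ K y.1 y.2) (actionPosterior ρ' K y.1 y.2) := by
  let e : (Z × Z) × A ≃ (Z × A) × Z :=
    ⟨fun w => ((w.1.1, w.2), w.1.2), fun x => ((x.1.1, x.2), x.1.2), fun _ => rfl, fun _ => rfl⟩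
  have hjoint : ∀ σ : Z × A → ℝ, (∀ x, 0 ≤ σ x) →
      (fun x : (Z × A) × Z => σ x.1 * K x.1.1 x.1.2 x.2) ∘ e
        = fun w => actionPosterior σ K w.1.1 w.1.2 w.2 * transitionMarginal σ K w.1 :=
    fun σ hσ0 => funext fun w => (actionPosterior_mul_transitionMarginal hσ0 hK0 _ _ _).symm
  calc tvDist ρ ρ'
      = tvDist (fun x : (Z × A) × Z => ρ x.1 * K x.1.1 x.1.2 x.2)
          (fun x => ρ' x.1 * K x.1.1 x.1.2 x.2) :=
        (tvDist_mul_kernel ρ ρ' (fun x => hK0 x.1 x.2) fun x => hK1 x.1 x.2).symm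
    _ = tvDist
          (fun w : (Z × Z) × A => actionPosterior ρ K w.1.1 w.1.2 w.2 * transitionMarginal ρ K w.1)
          (fun w => actionPosterior ρ' K w.1.1 w.1.2 w.2 * transitionMarginal ρ' K w.1) := by
        rw [← tvDist_comp_equiv e, hjoint ρ hρ0, hjoint ρ' hρ'0]
    _ ≤ _ := tvDist_mul_le (p := transitionMarginal ρ K) (q := transitionMarginal ρ' K)
        (P := fun y => actionPosterior ρ K y.1 y.2) (Q := fun y => actionPosterior ρ' K y.1 y.2)
        (transitionMarginal_nonneg hρ0 hK0) (fun y => actionPosterior_nonneg hρ'0 hK0 y.1 y.2)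
        fun y => sum_actionPosterior_le_one y.1 y.2

variable [Fintype Z] {S : Type*} [Fintype S]

noncomputable def latentReturn (γ : ℝ) (P : Z → S → ℝ) (R : S → A → ℝ) (ρ : Z × A → ℝ) : ℝ :=
  1 / (1 - γ) * ∑ x : Z × A, ρ x * ∑ s, P x.1 s * R s x.2

theorem abs_latentReturn_sub_le {γ Rmax : ℝ} {P : Z → S → ℝ} {R : S → A → ℝ}
    (hγ : γ < 1) (hP0 : ∀ z s, 0 ≤ P z s) (hP1 : ∀ z, ∑ s, P z s = 1) (hR : ∀ s a, |R s a| ≤ Rmax)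
    (ρ ρ' : Z × A → ℝ) :
    |latentReturn γ P R ρ' - latentReturn γ P R ρ| ≤ 2 * Rmax / (1 - γ) * tvDist ρ ρ' := by
  have hγ' : 0 < 1 / (1 - γ) := one_div_pos.2 (sub_pos.2 hγ)
  rw [latentReturn, latentReturn, ← mul_sub, abs_mul, abs_of_pos hγ', abs_sub_comm]
  calc _ ≤ 1 / (1 - γ) * (2 * Rmax * tvDist ρ ρ') :=
        mul_le_mul_of_nonneg_left (abs_sum_mul_sub_sum_mul_le _ _ _ fun x =>
          abs_sum_mul_le_of_sum_eq_one (hP0 x.1) (hP1 x.1) fun s => hR s x.2) hγ'.le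
    _ = 2 * Rmax / (1 - γ) * tvDist ρ ρ' := by ring

end LatentModel

theorem subopt_bound_action_reward_general {S A Z : Type*} [Fintype S] [Fintype A] [Fintype Z]
    (R : S → A → ℝ) (Rmax : ℝ) (hR : ∀ s a, |R s a| ≤ Rmax)
    (γ : ℝ) (hγ1 : γ < 1)
    (P : Z → S → ℝ) (hP0 : ∀ z s, 0 ≤ P z s) (hP1 : ∀ z, ∑ s, P z s = 1)
    (K : Z → A → Z → ℝ) (hK0 : ∀ z a z', 0 ≤ K z a z') (hK1 : ∀ z a, ∑ z', K z a z' = 1)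
    (ρθ ρE : Z × A → ℝ)
    (hρθ0 : ∀ x, 0 ≤ ρθ x) (hρθ1 : ∑ x, ρθ x = 1)
    (hρE0 : ∀ x, 0 ≤ ρE x)
    (ρθt ρEt : Z × Z → ℝ)
    (hρθt : ∀ z z', ρθt (z, z') = ∑ a, ρθ (z, a) * K z a z')
    (hρEt : ∀ z z', ρEt (z, z') = ∑ a, ρE (z, a) * K z a z')
    (Pθ PE : Z → Z → A → ℝ)
    (hPθ : ∀ z z' a, Pθ z z' a = ρθ (z, a) * K z a z' / ρθt (z, z'))
    (hPE : ∀ z z' a, PE z z' a = ρE (z, a) * K z a z' / ρEt (z, z'))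
    (Jθ JE : ℝ)
    (hJθ : Jθ = (1 / (1 - γ)) * ∑ x : Z × A, ρθ x * ∑ s, P x.1 s * R s x.2)
    (hJE : JE = (1 / (1 - γ)) * ∑ x : Z × A, ρE x * ∑ s, P x.1 s * R s x.2) :
    |JE - Jθ|
      ≤ (2 * Rmax / (1 - γ)) * ((1 / 2) * ∑ y : Z × Z, |ρθt y - ρEt y|)
        + (2 * Rmax / (1 - γ))
            * ∑ y : Z × Z, ρθt y * ((1 / 2) * ∑ a, |Pθ y.1 y.2 a - PE y.1 y.2 a|) := by
  obtain rfl : ρθt = transitionMarginal ρθ K := funext fun y => hρθt y.1 y.2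
  obtain rfl : ρEt = transitionMarginal ρE K := funext fun y => hρEt y.1 y.2
  obtain rfl : Pθ = actionPosterior ρθ K := funext fun z => funext fun z' => funext (hPθ z z')
  obtain rfl : PE = actionPosterior ρE K := funext fun z => funext fun z' => funext (hPE z z')
  obtain rfl : Jθ = latentReturn γ P R ρθ := hJθ
  obtain rfl : JE = latentReturn γ P R ρE := hJE
  have hRmax : 0 ≤ Rmax := by
    obtain ⟨x, -, -⟩ := exists_ne_zero_of_sum_ne_zero (hρθ1.trans_ne one_ne_zero)
    obtain ⟨s, -, -⟩ := exists_ne_zero_of_sum_ne_zero ((hP1 x.1).trans_ne one_ne_zero)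
    exact (abs_nonneg _).trans (hR s x.2)
  have hc : 0 ≤ 2 * Rmax / (1 - γ) := div_nonneg (by positivity) (sub_pos.2 hγ1).le
  calc |latentReturn γ P R ρE - latentReturn γ P R ρθ|
      ≤ 2 * Rmax / (1 - γ) * tvDist ρθ ρE := abs_latentReturn_sub_le hγ1 hP0 hP1 hR ρθ ρE
    _ ≤ 2 * Rmax / (1 - γ) * (tvDist (transitionMarginal ρθ K) (transitionMarginal ρE K)
          + ∑ y, transitionMarginal ρθ K y
              * tvDist (actionPosterior ρθ K y.1 y.2) (actionPosterior ρE K y.1 y.2)) :=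
        mul_le_mul_of_nonneg_left (tvDist_le_tvDist_transitionMarginal_add hρθ0 hρE0 hK0 hK1) hc
    _ = _ := mul_add _ _ _

/-- Suboptimality bound with action-dependent rewards (Theorem 1, finite case).
With shared conditional `P(s|z)`, shared kernel `K(z'|z,a)`, latent state-action visitation
distributions `ρ_θ`, `ρ_E`, latent transition marginals `ρᵢᵗ(z,z') = Σ_a ρᵢ(z,a) K(z'|z,a)`,
action posteriors `Pᵢ(a|z,z') = ρᵢ(z,a) K(z'|z,a) / ρᵢᵗ(z,z')`, and
`Jᵢ = (1/(1−γ)) Σ_{z,a} ρᵢ(z,a) Σ_s P(s|z) R(s,a)`: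
`|J_E − J_θ| ≤ (2R_max/(1−γ))·D_TV(ρ_θᵗ, ρ_Eᵗ)
             + (2R_max/(1−γ))·E_{(z,z')∼ρ_θᵗ}[D_TV(P_θ(·|z,z'), P_E(·|z,z'))]`. -/
theorem subopt_bound_action_reward {S A Z : Type*} [Fintype S] [Fintype A] [Fintype Z]
    (R : S → A → ℝ) (Rmax : ℝ) (hR : ∀ s a, |R s a| ≤ Rmax)
    (γ : ℝ) (hγ0 : 0 ≤ γ) (hγ1 : γ < 1)
    (P : Z → S → ℝ) (hP0 : ∀ z s, 0 ≤ P z s) (hP1 : ∀ z, ∑ s, P z s = 1)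
    (K : Z → A → Z → ℝ) (hK0 : ∀ z a z', 0 ≤ K z a z') (hK1 : ∀ z a, ∑ z', K z a z' = 1)
    (ρθ ρE : Z × A → ℝ)
    (hρθ0 : ∀ x, 0 ≤ ρθ x) (hρθ1 : ∑ x, ρθ x = 1)
    (hρE0 : ∀ x, 0 ≤ ρE x) (hρE1 : ∑ x, ρE x = 1)
    (ρθt ρEt : Z × Z → ℝ)
    (hρθt : ∀ z z', ρθt (z, z') = ∑ a, ρθ (z, a) * K z a z')
    (hρEt : ∀ z z', ρEt (z, z') = ∑ a, ρE (z, a) * K z a z')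
    (Pθ PE : Z → Z → A → ℝ)
    (hPθ : ∀ z z' a, Pθ z z' a = ρθ (z, a) * K z a z' / ρθt (z, z'))
    (hPE : ∀ z z' a, PE z z' a = ρE (z, a) * K z a z' / ρEt (z, z'))
    (Jθ JE : ℝ)
    (hJθ : Jθ = (1 / (1 - γ)) * ∑ x : Z × A, ρθ x * ∑ s, P x.1 s * R s x.2)
    (hJE : JE = (1 / (1 - γ)) * ∑ x : Z × A, ρE x * ∑ s, P x.1 s * R s x.2) :
    |JE - Jθ|
      ≤ (2 * Rmax / (1 - γ)) * ((1 / 2) * ∑ y : Z × Z, |ρθt y - ρEt y|)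
        + (2 * Rmax / (1 - γ))
            * ∑ y : Z × Z, ρθt y * ((1 / 2) * ∑ a, |Pθ y.1 y.2 a - PE y.1 y.2 a|) :=
  subopt_bound_action_reward_general R Rmax hR γ hγ1 P hP0 hP1 K hK0 hK1 ρθ ρE hρθ0 hρθ1 hρE0 ρθt
    ρEt hρθt hρEt Pθ PE hPθ hPE Jθ JE hJθ hJE
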